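/- Let 0<α<1 and let A_0,A_1,A_2,… be n×n complex matrices with ‖A_m‖ ≤ M·μ^m for all m≥0, for some constants M,μ>0. Set β(l)=Γ(lα+1)/Γ(lα+1−α). Suppose vectors u_0,u_1,u_2,… ∈ ℂ^n satisfy A_0 u_0 = (1/Γ(1−α)) u_0 and (A_0 − β(l)·I) u_l = −Σ_{k=1}^{l} A_k u_{l−k} for every l≥1. Then limsup_{k→∞} ‖u_k‖^{1/k} < ∞; that is, the power series Σ_{k=0}^∞ u_k z^k has a positive radius of convergence, so the formal solution u(t)=Σ u_k t^{αk} of the system t^α (D^α_{0+} u)(t)=A(t^α)u(t) converges absolutely on a neighbourhood of the origin. -/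
import Mathlib
set_option maxHeartbeats 1000000


/-- The coefficient sequence `β(l) = Γ(lα+1)/Γ(lα+1-α)` coming from the
Riemann–Liouville fractional derivative of order `α`. -/
noncomputable def glBeta (α : ℝ) (l : ℕ) : ℝ :=
  Real.Gamma (l * α + 1) / Real.Gamma (l * α + 1 - α)

/-- Gautschi-type lower bound from log-convexity of `Γ`:
for `x > 0` and `0 < s < 1`, `x ^ (1-s) ≤ Γ(x+1)/Γ(x+s)`. -/
lemma gamma_ratio_lower (x s : ℝ) (hx : 0 < x) (hs0 : 0 < s) (hs1 : s < 1) :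
    x ^ (1 - s) ≤ Real.Gamma (x + 1) / Real.Gamma (x + s) := by
  have hΓx : 0 < Real.Gamma x := Real.Gamma_pos_of_pos hx
  have hΓx1 : 0 < Real.Gamma (x + 1) := Real.Gamma_pos_of_pos (by linarith)
  have hΓxs : 0 < Real.Gamma (x + s) := Real.Gamma_pos_of_pos (by linarith)
  have hconv := Real.convexOn_log_Gamma.2 (Set.mem_Ioi.2 hx)
      (Set.mem_Ioi.2 (show (0:ℝ) < x + 1 by linarith))
      (show (0:ℝ) ≤ 1 - s by linarith) (le_of_lt hs0) (by ring)
  have hcomb : (1 - s) • x + s • (x + 1) = x + s := by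
    simp [smul_eq_mul]; ring
  rw [hcomb] at hconv
  simp only [Function.comp_apply, smul_eq_mul] at hconv
  -- hconv : log Γ(x+s) ≤ (1-s) * log Γ x + s * log Γ (x+1)
  have hΓadd : Real.Gamma (x + 1) = x * Real.Gamma x := Real.Gamma_add_one hx.ne'
  have hlogadd : Real.log (Real.Gamma (x + 1)) = Real.log x + Real.log (Real.Gamma x) := by
    rw [hΓadd, Real.log_mul hx.ne' hΓx.ne']
  have hkey : (1 - s) * Real.log x ≤
      Real.log (Real.Gamma (x + 1)) - Real.log (Real.Gamma (x + s)) := by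
    nlinarith [hconv, hlogadd]
  calc x ^ (1 - s) = Real.exp ((1 - s) * Real.log x) := by
        rw [Real.rpow_def_of_pos hx, mul_comm]
    _ ≤ Real.exp (Real.log (Real.Gamma (x + 1)) - Real.log (Real.Gamma (x + s))) :=
        Real.exp_le_exp.2 hkey
    _ = Real.Gamma (x + 1) / Real.Gamma (x + s) := by
        rw [Real.exp_sub, Real.exp_log hΓx1, Real.exp_log hΓxs]

/-- **Convergence of formal solutions near a regular singularity.**
Let `0 < α < 1` and let `A₀, A₁, A₂, …` be `n × n` complex matrices (realized as continuous
linear operators on `ℂⁿ`) with `‖Aₘ‖ ≤ M μᵐ`.  If vectors `u₀, u₁, … ∈ ℂⁿ` satisfy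
`A₀ u₀ = u₀ / Γ(1-α)` and `(A₀ - β(l)I) u_l = - Σ_{k=1}^{l} A_k u_{l-k}` for `l ≥ 1`,
then the power series `Σ u_k z^k` has a positive radius of convergence; i.e. the formal
solution `u(t) = Σ u_k t^{αk}` of `t^α (D^α_{0+} u)(t) = A(t^α) u(t)` converges absolutely
on a neighbourhood of the origin. -/
theorem formal_solution_regular_singularity_converges
    (α : ℝ) (hα : 0 < α) (hα1 : α < 1) (n : ℕ)
    (A : ℕ → (EuclideanSpace ℂ (Fin n) →L[ℂ] EuclideanSpace ℂ (Fin n)))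
    (M μ : ℝ) (hM : 0 < M) (hμ : 0 < μ)
    (hA : ∀ m : ℕ, ‖A m‖ ≤ M * μ ^ m)
    (u : ℕ → EuclideanSpace ℂ (Fin n))
    (h0 : A 0 (u 0) = ((1 / Real.Gamma (1 - α) : ℝ) : ℂ) • u 0)
    (hrec : ∀ l : ℕ, 1 ≤ l →
      A 0 (u l) - ((glBeta α l : ℝ) : ℂ) • u l
        = - ∑ k ∈ Finset.Icc 1 l, A k (u (l - k))) :
    ∃ r > (0 : ℝ), Summable (fun k : ℕ => ‖u k‖ * r ^ k) := by
  -- β(l) ≥ (lα)^α for l ≥ 1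
  have hbeta_lb : ∀ l : ℕ, 1 ≤ l → ((l : ℝ) * α) ^ α ≤ glBeta α l := by
    intro l hl
    have hx : 0 < (l : ℝ) * α := by
      have : (1:ℝ) ≤ l := by exact_mod_cast hl
      nlinarith
    have := gamma_ratio_lower ((l : ℝ) * α) (1 - α) hx (by linarith) (by linarith)
    simpa [glBeta, show (1:ℝ) - (1 - α) = α by ring,
      show (l : ℝ) * α + (1 - α) = l * α + 1 - α by ring] using this
  -- (lα)^α → ∞, hence β(l) ≥ 2M eventually
  have htend : Filter.Tendsto (fun l : ℕ => ((l : ℝ) * α) ^ α) Filter.atTop Filter.atTop :=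
    (tendsto_rpow_atTop hα).comp (tendsto_natCast_atTop_atTop.atTop_mul_const hα)
  obtain ⟨L0, hL0⟩ := Filter.eventually_atTop.1 (htend.eventually_ge_atTop (2 * M))
  set L := max L0 1 with hL
  have hbetaL : ∀ l : ℕ, L ≤ l → 2 * M ≤ glBeta α l := by
    intro l hl
    exact le_trans (hL0 l (le_trans (le_max_left _ _) hl))
      (hbeta_lb l (le_trans (le_max_right _ _) hl))
  set ρ : ℝ := 2 * μ with hρdef
  have hρ : 0 < ρ := by positivity
  -- the constant C
  set C : ℝ := 1 + ∑ j ∈ Finset.range L, ‖u j‖ / ρ ^ j with hC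
  have hC0 : 0 < C := by
    have h : (0:ℝ) ≤ ∑ j ∈ Finset.range L, ‖u j‖ / ρ ^ j :=
      Finset.sum_nonneg fun j _ => by positivity
    rw [hC]; linarith
  have hCsmall : ∀ j, j < L → ‖u j‖ ≤ C * ρ ^ j := by
    intro j hj
    have h1 : ‖u j‖ / ρ ^ j ≤ ∑ i ∈ Finset.range L, ‖u i‖ / ρ ^ i :=
      Finset.single_le_sum (f := fun i => ‖u i‖ / ρ ^ i)
        (fun i _ => by positivity) (Finset.mem_range.2 hj)
    have h2 : ‖u j‖ / ρ ^ j ≤ C := by rw [hC]; linarith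
    calc ‖u j‖ = ‖u j‖ / ρ ^ j * ρ ^ j := by field_simp
      _ ≤ C * ρ ^ j := by
          exact mul_le_mul_of_nonneg_right h2 (by positivity)
  -- geometric partial sums
  have hgeo : ∀ l : ℕ, ∑ k ∈ Finset.Icc 1 l, ((1:ℝ)/2) ^ k ≤ 1 := by
    intro l
    have heq : ∀ l : ℕ, ∑ k ∈ Finset.Icc 1 l, ((1:ℝ)/2) ^ k = 1 - (1/2) ^ l := by
      intro l
      induction l with
      | zero => simp
      | succ m ih =>
          rw [Finset.sum_Icc_succ_top (by omega), ih]
          ring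
    rw [heq]
    have : (0:ℝ) ≤ (1/2 : ℝ) ^ l := by positivity
    linarith
  -- main induction
  have key : ∀ l : ℕ, ‖u l‖ ≤ C * ρ ^ l := by
    intro l
    induction l using Nat.strong_induction_on with
    | _ l ih =>
      by_cases hl : l < L
      · exact hCsmall l hl
      · push_neg at hl
        have hl1 : 1 ≤ l := le_trans (le_max_right _ _) hl
        have hβ := hbetaL l hl
        have hβpos : 0 < glBeta α l := by linarith
        -- rewrite recurrence
        have hb : ((glBeta α l : ℝ) : ℂ) • u l
            = A 0 (u l) + ∑ k ∈ Finset.Icc 1 l, A k (u (l - k)) := by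
          have h := hrec l hl1
          have : ((glBeta α l : ℝ) : ℂ) • u l
              = A 0 (u l) - (A 0 (u l) - ((glBeta α l : ℝ) : ℂ) • u l) := by abel
          rw [this, h]; abel
        have hnorml : ‖(((glBeta α l : ℝ) : ℂ)) • u l‖ = glBeta α l * ‖u l‖ := by
          rw [norm_smul]
          simp [abs_of_pos hβpos]
        -- bound the sum
        have hsum : ‖∑ k ∈ Finset.Icc 1 l, A k (u (l - k))‖ ≤ M * C * ρ ^ l := by
          calc ‖∑ k ∈ Finset.Icc 1 l, A k (u (l - k))‖
              ≤ ∑ k ∈ Finset.Icc 1 l, ‖A k (u (l - k))‖ := norm_sum_le _ _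
            _ ≤ ∑ k ∈ Finset.Icc 1 l, M * C * ρ ^ l * (1/2) ^ k := by
                apply Finset.sum_le_sum
                intro k hk
                obtain ⟨hk1, hkl⟩ := Finset.mem_Icc.1 hk
                have hterm : ‖A k (u (l - k))‖ ≤ M * μ ^ k * (C * ρ ^ (l - k)) := by
                  calc ‖A k (u (l - k))‖ ≤ ‖A k‖ * ‖u (l - k)‖ :=
                        (A k).le_opNorm _
                    _ ≤ (M * μ ^ k) * (C * ρ ^ (l - k)) := by
                        apply mul_le_mul (hA k) (ih (l - k) (by omega))
                          (norm_nonneg _) (by positivity)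
                have hpow : μ ^ k * ρ ^ (l - k) = ρ ^ l * (1/2) ^ k := by
                  have h2 : (2:ℝ) ^ l = 2 ^ (l - k) * 2 ^ k := by
                    rw [← pow_add, Nat.sub_add_cancel hkl]
                  have hμl : μ ^ l = μ ^ (l - k) * μ ^ k := by
                    rw [← pow_add, Nat.sub_add_cancel hkl]
                  rw [hρdef, mul_pow, mul_pow, h2, hμl, one_div, inv_pow]
                  have : (2:ℝ) ^ k ≠ 0 := by positivity
                  field_simp
                calc ‖A k (u (l - k))‖ ≤ M * μ ^ k * (C * ρ ^ (l - k)) := hterm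
                  _ = M * C * (μ ^ k * ρ ^ (l - k)) := by ring
                  _ = M * C * ρ ^ l * (1/2) ^ k := by rw [hpow]; ring
            _ = M * C * ρ ^ l * ∑ k ∈ Finset.Icc 1 l, ((1:ℝ)/2) ^ k := by
                rw [Finset.mul_sum]
            _ ≤ M * C * ρ ^ l * 1 := by
                apply mul_le_mul_of_nonneg_left (hgeo l)
                  (mul_nonneg (mul_nonneg hM.le hC0.le) (pow_nonneg hρ.le l))
            _ = M * C * ρ ^ l := by ring
        have hA0 : ‖A 0 (u l)‖ ≤ M * ‖u l‖ := by
          calc ‖A 0 (u l)‖ ≤ ‖A 0‖ * ‖u l‖ := (A 0).le_opNorm _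
            _ ≤ M * ‖u l‖ := by
                have := hA 0
                simp only [pow_zero, mul_one] at this
                exact mul_le_mul_of_nonneg_right this (norm_nonneg _)
        have hmain : glBeta α l * ‖u l‖ ≤ M * ‖u l‖ + M * C * ρ ^ l := by
          calc glBeta α l * ‖u l‖ = ‖(((glBeta α l : ℝ) : ℂ)) • u l‖ := hnorml.symm
            _ = ‖A 0 (u l) + ∑ k ∈ Finset.Icc 1 l, A k (u (l - k))‖ := by rw [hb]
            _ ≤ ‖A 0 (u l)‖ + ‖∑ k ∈ Finset.Icc 1 l, A k (u (l - k))‖ := norm_add_le _ _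
            _ ≤ M * ‖u l‖ + M * C * ρ ^ l := add_le_add hA0 hsum
        -- conclude
        have h1 : 2 * M * ‖u l‖ ≤ M * ‖u l‖ + M * C * ρ ^ l :=
          le_trans (mul_le_mul_of_nonneg_right hβ (norm_nonneg _)) hmain
        have h2 : M * ‖u l‖ ≤ M * (C * ρ ^ l) := by linarith
        exact le_of_mul_le_mul_left h2 hM
  -- conclude summability with r = 1/(4μ)
  refine ⟨1 / (4 * μ), by positivity, ?_⟩
  have hsummable : Summable (fun k : ℕ => C * (1/2 : ℝ) ^ k) :=
    (summable_geometric_of_lt_one (by norm_num) (by norm_num)).mul_left C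
  apply Summable.of_nonneg_of_le (fun k => by positivity) _ hsummable
  intro k
  have hpr : ρ ^ k * (1 / (4 * μ)) ^ k = (1/2 : ℝ) ^ k := by
    rw [← mul_pow]
    congr 1
    rw [hρdef]
    field_simp
    ring
  calc ‖u k‖ * (1 / (4 * μ)) ^ k ≤ C * ρ ^ k * (1 / (4 * μ)) ^ k := by
        exact mul_le_mul_of_nonneg_right (key k) (by positivity)
    _ = C * (ρ ^ k * (1 / (4 * μ)) ^ k) := by ring
    _ = C * (1/2) ^ k := by rw [hpr]
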